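/- arXiv:1702.01092 — 2 statements merged into one kernel-verified Lean document; each statement's English description precedes it below -/
import Mathlib

section
/- Let $X_1,\ldots,X_n$ be L-weakly dependent random variables with coefficients $(\gamma_k)_{k\geq 1}$. Then for every $t \in \mathbb{R}$, $\left|\mathbb{E}\prod_{j=1}^n e^{itX_j} - \prod_{j=1}^n \mathbb{E}e^{itX_j}\right| \leq 4t^2 \sum_{j=1}^{n-1}(n-j)\gamma_j$. -/
/-! Write `φ_j = exp (i t X_j)`. Peeling off the smallest index telescopes
`E ∏ φ_j - ∏ E φ_j` into the covariances of `φ_m` with `∏_{j > m} φ_j = exp (i t ∑_{j > m} X_j)`,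
each multiplied by some `E φ_j` of modulus at most `1`. Taking real and imaginary parts, each such
complex covariance is a combination of four real covariances of `cos`/`sin` of `t X_m` and of
`t ∑_{j > m} X_j`; these are `|t|`-Lipschitz in the coordinates, so L-weak dependence bounds each
by `t² ∑_{j > m} γ_{j - m}`. Summing over `m`, the lag `k` occurs `n - k` times. -/

open MeasureTheory ProbabilityTheory Filter

noncomputable def cov {Ω : Type*} [MeasurableSpace Ω] (μ : Measure Ω) (f g : Ω → ℝ) : ℝ :=
  (∫ ω, f ω * g ω ∂μ) - (∫ ω, f ω ∂μ) * (∫ ω, g ω ∂μ)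

/-- L-weak dependence for a finite family `X : Fin n → Ω → ℝ`: for all disjoint index sets
`I, J` and functions `f, g` that are Lipschitz (w.r.t. the ℓ¹ metric) depending only on the
coordinates in `I` resp. `J`, the covariance is controlled by the coefficients `γ`. -/
def LWeakDepFin {Ω : Type*} [MeasurableSpace Ω] (μ : Measure Ω) {n : ℕ}
    (X : Fin n → Ω → ℝ) (γ : ℕ → ℝ) : Prop :=
  ∀ (I J : Finset (Fin n)), Disjoint I J →
    ∀ (f g : (Fin n → ℝ) → ℝ) (Lf Lg : ℝ),
      (∀ x y, |f x - f y| ≤ Lf * ∑ i ∈ I, |x i - y i|) →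
      (∀ x y, |g x - g y| ≤ Lg * ∑ j ∈ J, |x j - y j|) →
      |cov μ (fun ω => f (fun i => X i ω)) (fun ω => g (fun i => X i ω))|
        ≤ Lf * Lg * ∑ i ∈ I, ∑ j ∈ J, γ (((j : ℤ) - (i : ℤ)).natAbs)

open Finset Complex

section

variable {Ω : Type*} [MeasurableSpace Ω] {μ : Measure Ω}

noncomputable def complexCov (μ : Measure Ω) (F G : Ω → ℂ) : ℂ :=
  (∫ ω, F ω * G ω ∂μ) - (∫ ω, F ω ∂μ) * (∫ ω, G ω ∂μ)

lemma re_integral_eq_integral_re {f : Ω → ℂ} (hf : Integrable f μ) :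
    (∫ ω, f ω ∂μ).re = ∫ ω, (f ω).re ∂μ :=
  (integral_re hf).symm

lemma im_integral_eq_integral_im {f : Ω → ℂ} (hf : Integrable f μ) :
    (∫ ω, f ω ∂μ).im = ∫ ω, (f ω).im ∂μ :=
  (integral_im hf).symm

section FiniteMeasure

variable [IsFiniteMeasure μ] {F G : Ω → ℂ}

lemma re_complexCov (hF : MemLp F 2 μ) (hG : MemLp G 2 μ) :
    (complexCov μ F G).re
      = cov μ (fun ω => (F ω).re) (fun ω => (G ω).re)
        - cov μ (fun ω => (F ω).im) (fun ω => (G ω).im) := by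
  have hFG : Integrable (fun ω => F ω * G ω) μ := hF.integrable_mul hG
  have hrr : Integrable (fun ω => (F ω).re * (G ω).re) μ := hF.re.integrable_mul hG.re
  have hii : Integrable (fun ω => (F ω).im * (G ω).im) μ := hF.im.integrable_mul hG.im
  rw [complexCov, sub_re, mul_re, re_integral_eq_integral_re hFG,
    re_integral_eq_integral_re (hF.integrable one_le_two),
    re_integral_eq_integral_re (hG.integrable one_le_two),
    im_integral_eq_integral_im (hF.integrable one_le_two),
    im_integral_eq_integral_im (hG.integrable one_le_two)]
  simp only [mul_re, integral_sub hrr hii, cov]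
  ring

lemma im_complexCov (hF : MemLp F 2 μ) (hG : MemLp G 2 μ) :
    (complexCov μ F G).im
      = cov μ (fun ω => (F ω).re) (fun ω => (G ω).im)
        + cov μ (fun ω => (F ω).im) (fun ω => (G ω).re) := by
  have hFG : Integrable (fun ω => F ω * G ω) μ := hF.integrable_mul hG
  have hri : Integrable (fun ω => (F ω).re * (G ω).im) μ := hF.re.integrable_mul hG.im
  have hir : Integrable (fun ω => (F ω).im * (G ω).re) μ := hF.im.integrable_mul hG.re
  rw [complexCov, sub_im, mul_im, im_integral_eq_integral_im hFG,
    re_integral_eq_integral_re (hF.integrable one_le_two),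
    re_integral_eq_integral_re (hG.integrable one_le_two),
    im_integral_eq_integral_im (hF.integrable one_le_two),
    im_integral_eq_integral_im (hG.integrable one_le_two)]
  simp only [mul_im, integral_add hri hir, cov]
  ring

lemma norm_complexCov_le (hF : MemLp F 2 μ) (hG : MemLp G 2 μ) :
    ‖complexCov μ F G‖
      ≤ |cov μ (fun ω => (F ω).re) (fun ω => (G ω).re)|
        + |cov μ (fun ω => (F ω).im) (fun ω => (G ω).im)|
        + (|cov μ (fun ω => (F ω).re) (fun ω => (G ω).im)|
          + |cov μ (fun ω => (F ω).im) (fun ω => (G ω).re)|) := by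
  calc ‖complexCov μ F G‖ ≤ |(complexCov μ F G).re| + |(complexCov μ F G).im| :=
        norm_le_abs_re_add_abs_im _
    _ ≤ _ := by
        rw [re_complexCov hF hG, im_complexCov hF hG]
        exact add_le_add (abs_sub _ _) (abs_add_le _ _)

end FiniteMeasure

lemma norm_integral_prod_sub_prod_integral_le [IsProbabilityMeasure μ] {ι : Type*} [LinearOrder ι]
    (s : Finset ι) (φ : ι → Ω → ℂ) (hφ : ∀ i ∈ s, ‖∫ ω, φ i ω ∂μ‖ ≤ 1) :
    ‖(∫ ω, ∏ i ∈ s, φ i ω ∂μ) - ∏ i ∈ s, ∫ ω, φ i ω ∂μ‖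
      ≤ ∑ m ∈ s, ‖complexCov μ (φ m) (fun ω => ∏ j ∈ s with m < j, φ j ω)‖ := by
  classical
  induction s using Finset.induction_on_min with
  | empty => simp
  | insert a s ha_lt ih =>
    have ha : a ∉ s := fun h => lt_irrefl a (ha_lt a h)
    have h_filter_a : {j ∈ insert a s | a < j} = s := by
      rw [filter_insert, if_neg (lt_irrefl a), filter_true_of_mem ha_lt]
    have h_filter_m : ∀ m ∈ s, {j ∈ insert a s | m < j} = {j ∈ s | m < j} := fun m hm => by
      rw [filter_insert, if_neg (ha_lt m hm).asymm]
    rw [sum_insert ha, h_filter_a, sum_congr rfl fun m hm => by rw [h_filter_m m hm]]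
    simp only [prod_insert ha]
    calc ‖(∫ ω, φ a ω * ∏ i ∈ s, φ i ω ∂μ) - (∫ ω, φ a ω ∂μ) * ∏ i ∈ s, ∫ ω, φ i ω ∂μ‖
        = ‖complexCov μ (φ a) (fun ω => ∏ i ∈ s, φ i ω)
            + (∫ ω, φ a ω ∂μ) * ((∫ ω, ∏ i ∈ s, φ i ω ∂μ) - ∏ i ∈ s, ∫ ω, φ i ω ∂μ)‖ := by
          congr 1
          rw [complexCov]
          ring
      _ ≤ ‖complexCov μ (φ a) (fun ω => ∏ i ∈ s, φ i ω)‖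
            + ‖∫ ω, φ a ω ∂μ‖ * ‖(∫ ω, ∏ i ∈ s, φ i ω ∂μ) - ∏ i ∈ s, ∫ ω, φ i ω ∂μ‖ :=
          (norm_add_le _ _).trans_eq (by rw [norm_mul])
      _ ≤ ‖complexCov μ (φ a) (fun ω => ∏ i ∈ s, φ i ω)‖
            + ∑ m ∈ s, ‖complexCov μ (φ m) (fun ω => ∏ j ∈ s with m < j, φ j ω)‖ := by
          gcongr
          exact (mul_le_of_le_one_left (norm_nonneg _) (hφ a (mem_insert_self a s))).trans
            (ih fun i hi => hφ i (mem_insert_of_mem hi))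

lemma LWeakDepFin.abs_cov_comp_le {n : ℕ} {X : Fin n → Ω → ℝ} {γ : ℕ → ℝ}
    (hdep : LWeakDepFin μ X γ) {m : Fin n} {J : Finset (Fin n)} (hm : m ∉ J)
    {F G : ℝ → ℝ} (hF : LipschitzWith 1 F) (hG : LipschitzWith 1 G) (t : ℝ) :
    |cov μ (fun ω => F (t * X m ω)) (fun ω => G (t * ∑ j ∈ J, X j ω))|
      ≤ t ^ 2 * ∑ j ∈ J, γ ((j : ℤ) - m).natAbs := by
  have hF' : ∀ a b, |F a - F b| ≤ |a - b| := fun a b => by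
    simpa [Real.dist_eq] using hF.dist_le_mul a b
  have hG' : ∀ a b, |G a - G b| ≤ |a - b| := fun a b => by
    simpa [Real.dist_eq] using hG.dist_le_mul a b
  have h := hdep {m} J (disjoint_singleton_left.mpr hm)
    (fun x => F (t * x m)) (fun x => G (t * ∑ j ∈ J, x j)) |t| |t|
    (fun x y => by
      rw [sum_singleton, ← abs_mul, mul_sub]
      exact hF' _ _)
    (fun x y => calc
      _ ≤ |t * ∑ j ∈ J, x j - t * ∑ j ∈ J, y j| := hG' _ _
      _ = |t| * |∑ j ∈ J, (x j - y j)| := by rw [← mul_sub, abs_mul, sum_sub_distrib]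
      _ ≤ |t| * ∑ j ∈ J, |x j - y j| := by gcongr; exact abs_sum_le_sum_abs _ _)
  rwa [sum_singleton, abs_mul_abs_self, ← sq] at h

lemma norm_complexCov_exp_le [IsProbabilityMeasure μ] {n : ℕ} {X : Fin n → Ω → ℝ} {γ : ℕ → ℝ}
    (hmeas : ∀ j, Measurable (X j)) (hdep : LWeakDepFin μ X γ) {m : Fin n} {J : Finset (Fin n)}
    (hm : m ∉ J) (t : ℝ) :
    ‖complexCov μ (fun ω => exp (I * ↑(t * X m ω)))
        (fun ω => ∏ j ∈ J, exp (I * ↑(t * X j ω)))‖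
      ≤ 4 * t ^ 2 * ∑ j ∈ J, γ ((j : ℤ) - m).natAbs := by
  have h_prod : (fun ω => ∏ j ∈ J, exp (I * ↑(t * X j ω)))
      = fun ω => exp (I * ↑(t * ∑ j ∈ J, X j ω)) := by
    ext ω
    rw [← exp_sum, mul_sum, ofReal_sum, mul_sum]
  have h_memLp : ∀ {f : Ω → ℝ}, Measurable f → MemLp (fun ω => exp (I * ↑(f ω))) 2 μ :=
    fun hf => (memLp_top_of_bound (by fun_prop) 1
      (ae_of_all _ fun ω => (norm_exp_I_mul_ofReal _).le)).mono_exponent le_top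
  rw [h_prod]
  refine (norm_complexCov_le (h_memLp (f := fun ω => t * X m ω) (by fun_prop))
    (h_memLp (f := fun ω => t * ∑ j ∈ J, X j ω) (by fun_prop))).trans ?_
  simp only [mul_comm I, exp_ofReal_mul_I_re, exp_ofReal_mul_I_im]
  have hcc := hdep.abs_cov_comp_le hm Real.lipschitzWith_cos Real.lipschitzWith_cos t
  have hss := hdep.abs_cov_comp_le hm Real.lipschitzWith_sin Real.lipschitzWith_sin t
  have hcs := hdep.abs_cov_comp_le hm Real.lipschitzWith_cos Real.lipschitzWith_sin t
  have hsc := hdep.abs_cov_comp_le hm Real.lipschitzWith_sin Real.lipschitzWith_cos t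
  linarith

end

lemma sum_range_sum_Ico_one_sub (f : ℕ → ℝ) (n : ℕ) :
    ∑ m ∈ range n, ∑ k ∈ Ico 1 (n - m), f k = ∑ k ∈ Ico 1 n, ((n : ℝ) - k) * f k := by
  induction n with
  | zero => simp
  | succ n ih =>
    simp only [sum_range_succ', Nat.add_sub_add_right, Nat.sub_zero, ih]
    rcases Nat.eq_zero_or_pos n with rfl | hn
    · simp
    rw [sum_Ico_succ_top hn, sum_Ico_succ_top hn, ← add_assoc, ← sum_add_distrib]
    push_cast
    congr 1
    · exact sum_congr rfl fun k _ => by ring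
    · ring

lemma Fin.sum_Ioi_natAbs_sub {n : ℕ} (f : ℕ → ℝ) (m : Fin n) :
    ∑ j ∈ Ioi m, f ((j : ℤ) - m).natAbs = ∑ k ∈ Ico 1 (n - m), f k := by
  have hm : (n - m) + m = n := Nat.sub_add_cancel m.is_lt.le
  calc ∑ j ∈ Ioi m, f ((j : ℤ) - m).natAbs
      = ∑ j ∈ (Ioi m).map Fin.valEmbedding, f (j - m) := by
        rw [sum_map]
        refine sum_congr rfl fun j hj => congrArg f ?_
        rw [mem_Ioi] at hj
        simp only [Fin.valEmbedding_apply]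
        omega
    _ = ∑ j ∈ Ico (1 + (m : ℕ)) ((n - m) + m), f (j - m) := by
        rw [Fin.map_valEmbedding_Ioi, hm]
        congr 1
        ext j
        simp only [mem_Ioo, mem_Ico]
        omega
    _ = ∑ k ∈ Ico 1 (n - m), f k := by
        rw [← sum_Ico_add']
        simp

theorem stmt6_general {Ω : Type*} [MeasurableSpace Ω] (μ : Measure Ω) [IsProbabilityMeasure μ]
    {n : ℕ} (X : Fin n → Ω → ℝ) (hmeas : ∀ j, Measurable (X j))
    (γ : ℕ → ℝ)
    (hdep : LWeakDepFin μ X γ) (t : ℝ) :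
    ‖(∫ ω, ∏ j, Complex.exp (Complex.I * ((t * X j ω : ℝ) : ℂ)) ∂μ)
        - ∏ j, ∫ ω, Complex.exp (Complex.I * ((t * X j ω : ℝ) : ℂ)) ∂μ‖
      ≤ 4 * t ^ 2 * ∑ j ∈ Finset.Ico 1 n, ((n : ℝ) - (j : ℝ)) * γ j := by
  have h_int : ∀ j ∈ univ, ‖∫ ω, exp (I * ↑(t * X j ω)) ∂μ‖ ≤ 1 :=
    fun j _ => by
      simpa using norm_integral_le_of_norm_le_const (μ := μ)
        (ae_of_all _ fun ω => (norm_exp_I_mul_ofReal (t * X j ω)).le)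
  calc _ ≤ ∑ m, ‖complexCov μ (fun ω => exp (I * ↑(t * X m ω)))
          (fun ω => ∏ j ∈ univ with m < j, exp (I * ↑(t * X j ω)))‖ :=
        norm_integral_prod_sub_prod_integral_le univ _ h_int
    _ ≤ ∑ m : Fin n, 4 * t ^ 2 * ∑ j ∈ Ioi m, γ ((j : ℤ) - m).natAbs := by
        refine sum_le_sum fun m _ => ?_
        rw [filter_lt_eq_Ioi]
        exact norm_complexCov_exp_le hmeas hdep notMem_Ioi_self t
    _ = _ := by
        rw [← mul_sum]
        simp only [Fin.sum_Ioi_natAbs_sub]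
        rw [Fin.sum_univ_eq_sum_range (fun m => ∑ k ∈ Ico 1 (n - m), γ k),
          sum_range_sum_Ico_one_sub]

theorem stmt6 {Ω : Type*} [MeasurableSpace Ω] (μ : Measure Ω) [IsProbabilityMeasure μ]
    {n : ℕ} (X : Fin n → Ω → ℝ) (hmeas : ∀ j, Measurable (X j))
    (γ : ℕ → ℝ) (hγ : ∀ k, 0 ≤ γ k)
    (hdep : LWeakDepFin μ X γ) (t : ℝ) :
    ‖(∫ ω, ∏ j, Complex.exp (Complex.I * ((t * X j ω : ℝ) : ℂ)) ∂μ)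
        - ∏ j, ∫ ω, Complex.exp (Complex.I * ((t * X j ω : ℝ) : ℂ)) ∂μ‖
      ≤ 4 * t ^ 2 * ∑ j ∈ Finset.Ico 1 n, ((n : ℝ) - (j : ℝ)) * γ j :=
  stmt6_general μ X hmeas γ hdep t
end

section
/- Let $X_i$ be centered random variables with $\mathbb{E}|X_1|^{4+\delta} < \infty$ for some $\delta > 0$, stationary and L-weakly dependent with decreasing coefficients $(\gamma_k)$. For indices $1 \leq i \leq j < k \leq \ell$, one has $|\mathrm{Cov}(X_iX_j, X_kX_\ell)| \leq C\,\gamma_{k-j}^{\delta/(4+\delta)}$ for a constant $C$ depending only on the distribution of $X_1$. In particular, if $\gamma_k = O(k^{-2-8/\delta})$, then $\mathrm{Cov}(X_iX_j, X_kX_\ell) = O((k-j)^{-2})$. -/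
open MeasureTheory ProbabilityTheory Filter

/-- L-weak dependence of a sequence `X : ℕ → Ω → ℝ` with coefficients `γ`. -/
def LWeakDepNat {Ω : Type*} [MeasurableSpace Ω] (μ : Measure Ω)
    (X : ℕ → Ω → ℝ) (γ : ℕ → ℝ) : Prop :=
  ∀ (I J : Finset ℕ), Disjoint I J →
    ∀ (f g : (ℕ → ℝ) → ℝ) (Lf Lg : ℝ),
      (∀ x y, |f x - f y| ≤ Lf * ∑ i ∈ I, |x i - y i|) →
      (∀ x y, |g x - g y| ≤ Lg * ∑ j ∈ J, |x j - y j|) →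
      |cov μ (fun ω => f (fun i => X i ω)) (fun ω => g (fun i => X i ω))|
        ≤ Lf * Lg * ∑ i ∈ I, ∑ j ∈ J, γ (((j : ℤ) - (i : ℤ)).natAbs)

/-! Truncate every variable at level `c` with `clamp c`. Products of two truncated variables are
bounded by `c ^ 2` and `2 c`-Lipschitz, so L-weak dependence bounds their covariance by
`16 c ^ 2 γ (k - j)`. Truncation changes the covariance by `O(c ^ (-δ))`: a product of `n`
variables differs from its truncation only where the largest `|x m|` exceeds `c`, and there
`∏ |x m| ≤ max |x m| ^ (4 + δ) / c ^ (4 + δ - n)`. Taking `c = γ (k - j) ^ (-1 / (4 + δ))`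
balances the two errors. -/

noncomputable def clamp (c x : ℝ) : ℝ := max (min x c) (-c)

lemma abs_clamp_le {c : ℝ} (hc : 0 ≤ c) (x : ℝ) : |clamp c x| ≤ c :=
  abs_le.2 ⟨le_max_right _ _, max_le (min_le_right _ _) (by linarith)⟩

lemma abs_clamp_le_abs {c : ℝ} (hc : 0 ≤ c) (x : ℝ) : |clamp c x| ≤ |x| := by
  refine abs_le.2 ⟨?_, max_le ((min_le_left _ _).trans (le_abs_self x)) ?_⟩
  · exact (le_min (neg_abs_le x) (by linarith [abs_nonneg x])).trans (le_max_left _ _)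
  · linarith [abs_nonneg x]

lemma clamp_of_abs_le {c x : ℝ} (h : |x| ≤ c) : clamp c x = x := by
  rw [abs_le] at h
  rw [clamp, min_eq_left h.2, max_eq_left h.1]

lemma lipschitzWith_clamp (c : ℝ) : LipschitzWith 1 (clamp c) :=
  (LipschitzWith.id.min_const c).max_const (-c)

lemma measurable_clamp (c : ℝ) : Measurable (clamp c) :=
  (lipschitzWith_clamp c).continuous.measurable

lemma abs_clamp_sub_clamp_le (c x y : ℝ) : |clamp c x - clamp c y| ≤ |x - y| := by
  simpa [Real.dist_eq] using (lipschitzWith_clamp c).dist_le_mul x y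

lemma abs_clamp_mul_clamp_sub_le {c : ℝ} (hc : 0 ≤ c) (a b a' b' : ℝ) :
    |clamp c a * clamp c b - clamp c a' * clamp c b'| ≤ c * (|a - a'| + |b - b'|) := by
  have hsplit : clamp c a * clamp c b - clamp c a' * clamp c b'
      = clamp c a * (clamp c b - clamp c b') + clamp c b' * (clamp c a - clamp c a') := by ring
  rw [hsplit]
  refine (abs_add_le _ _).trans ?_
  rw [abs_mul, abs_mul]
  nlinarith [abs_clamp_le hc a, abs_clamp_le hc b', abs_clamp_sub_clamp_le c a a',
    abs_clamp_sub_clamp_le c b b', abs_nonneg (clamp c a), abs_nonneg (clamp c b'),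
    abs_nonneg (clamp c a - clamp c a'), abs_nonneg (clamp c b - clamp c b')]

lemma abs_prod_clamp_le {ι : Type*} [Fintype ι] {c : ℝ} (hc : 0 ≤ c) (x : ι → ℝ) :
    |∏ m, clamp c (x m)| ≤ c ^ Fintype.card ι := by
  rw [Finset.abs_prod, ← Finset.card_univ, ← Finset.prod_const]
  exact Finset.prod_le_prod (fun _ _ => abs_nonneg _) fun _ _ => abs_clamp_le hc _

lemma abs_clamp_mul_clamp_le {c : ℝ} (hc : 0 ≤ c) (a b : ℝ) : |clamp c a * clamp c b| ≤ c ^ 2 := by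
  rw [abs_mul, sq]
  exact mul_le_mul (abs_clamp_le hc a) (abs_clamp_le hc b) (abs_nonneg _) hc

lemma abs_prod_sub_prod_clamp_le {ι : Type*} [Fintype ι] (x : ι → ℝ) {c p : ℝ} (hc : 0 < c)
    (hp : (Fintype.card ι : ℝ) ≤ p) :
    |∏ m, x m - ∏ m, clamp c (x m)| ≤ 2 * (∑ m, |x m| ^ p) / c ^ (p - Fintype.card ι) := by
  have hrhs : 0 ≤ 2 * (∑ m, |x m| ^ p) / c ^ (p - Fintype.card ι) := by positivity
  by_cases hsmall : ∀ m, |x m| ≤ c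
  · simp [clamp_of_abs_le (hsmall _), hrhs]
  obtain ⟨m₀, hm₀⟩ := not_forall.1 hsmall
  rw [not_le] at hm₀
  obtain ⟨m, -, hmax⟩ := Finset.univ.exists_max_image (fun m => |x m|) ⟨m₀, Finset.mem_univ _⟩
  have hcx : c < |x m| := hm₀.trans_le (hmax m₀ (Finset.mem_univ _))
  have hx : 0 < |x m| := hc.trans hcx
  have hprod : ∏ m, |x m| ≤ |x m| ^ (Fintype.card ι : ℝ) := by
    rw [Real.rpow_natCast, ← Finset.card_univ, ← Finset.prod_const]
    exact Finset.prod_le_prod (fun _ _ => abs_nonneg _) fun m' _ => hmax m' (Finset.mem_univ _)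
  have hprod_clamp : ∏ m, |clamp c (x m)| ≤ ∏ m, |x m| :=
    Finset.prod_le_prod (fun _ _ => abs_nonneg _) fun _ _ => abs_clamp_le_abs hc.le _
  have hpow : |x m| ^ (Fintype.card ι : ℝ) ≤ |x m| ^ p / c ^ (p - Fintype.card ι) := by
    rw [le_div_iff₀ (by positivity)]
    calc |x m| ^ (Fintype.card ι : ℝ) * c ^ (p - Fintype.card ι)
        ≤ |x m| ^ (Fintype.card ι : ℝ) * |x m| ^ (p - Fintype.card ι) := by
          gcongr
      _ = |x m| ^ p := by rw [← Real.rpow_add hx]; ring_nf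
  have hsum : |x m| ^ p ≤ ∑ m, |x m| ^ p :=
    Finset.single_le_sum (f := fun m => |x m| ^ p) (fun _ _ => by positivity) (Finset.mem_univ m)
  calc |∏ m, x m - ∏ m, clamp c (x m)|
      ≤ ∏ m, |x m| + ∏ m, |clamp c (x m)| := by
        rw [← Finset.abs_prod, ← Finset.abs_prod]; exact abs_sub _ _
    _ ≤ 2 * (|x m| ^ p / c ^ (p - Fintype.card ι)) := by linarith
    _ ≤ 2 * (∑ m, |x m| ^ p) / c ^ (p - Fintype.card ι) := by
        rw [mul_div_assoc]; gcongr

section Truncation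

variable {Ω : Type*} [MeasurableSpace Ω] {μ : Measure Ω}

lemma abs_cov_sub_cov_le (U V U' V' : Ω → ℝ) :
    |cov μ U V - cov μ U' V'| ≤ |∫ ω, U ω * V ω ∂μ - ∫ ω, U' ω * V' ω ∂μ|
      + |∫ ω, U ω ∂μ - ∫ ω, U' ω ∂μ| * |∫ ω, V ω ∂μ|
      + |∫ ω, U' ω ∂μ| * |∫ ω, V ω ∂μ - ∫ ω, V' ω ∂μ| := by
  have hsplit : cov μ U V - cov μ U' V'
      = (∫ ω, U ω * V ω ∂μ - ∫ ω, U' ω * V' ω ∂μ)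
        - (∫ ω, U ω ∂μ - ∫ ω, U' ω ∂μ) * ∫ ω, V ω ∂μ
        - (∫ ω, U' ω ∂μ) * (∫ ω, V ω ∂μ - ∫ ω, V' ω ∂μ) := by
    simp only [cov]; ring
  rw [hsplit, ← abs_mul, ← abs_mul]
  exact (abs_sub _ _).trans (add_le_add (abs_sub _ _) le_rfl)

variable [IsProbabilityMeasure μ]

lemma abs_integral_le_of_abs_le {f : Ω → ℝ} {a : ℝ} (hf : ∀ ω, |f ω| ≤ a) : |∫ ω, f ω ∂μ| ≤ a := by
  simpa using norm_integral_le_of_norm_le_const (μ := μ)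
    (ae_of_all _ fun ω => (Real.norm_eq_abs (f ω)).trans_le (hf ω))

lemma abs_cov_le_of_abs_le {U V : Ω → ℝ} {a b : ℝ} (hU : ∀ ω, |U ω| ≤ a) (hV : ∀ ω, |V ω| ≤ b) :
    |cov μ U V| ≤ 2 * (a * b) := by
  have hUV : |∫ ω, U ω * V ω ∂μ| ≤ a * b := abs_integral_le_of_abs_le fun ω => by
    rw [abs_mul]; exact mul_le_mul (hU ω) (hV ω) (abs_nonneg _) ((abs_nonneg _).trans (hU ω))
  have hU' := abs_integral_le_of_abs_le (μ := μ) hU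
  have hV' := abs_integral_le_of_abs_le (μ := μ) hV
  have hprod : |(∫ ω, U ω ∂μ) * ∫ ω, V ω ∂μ| ≤ a * b := by
    rw [abs_mul]; exact mul_le_mul hU' hV' (abs_nonneg _) ((abs_nonneg _).trans hU')
  unfold cov
  linarith [abs_sub (∫ ω, U ω * V ω ∂μ) ((∫ ω, U ω ∂μ) * ∫ ω, V ω ∂μ)]

variable {ι : Type*} [Fintype ι] {Y : ι → Ω → ℝ} {p : ℝ}

lemma integrable_prod_clamp (hY : ∀ m, Measurable (Y m)) {c : ℝ} (hc : 0 ≤ c) :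
    Integrable (fun ω => ∏ m, clamp c (Y m ω)) μ :=
  Integrable.of_bound
    (Finset.measurable_prod _ fun m _ => (measurable_clamp c).comp (hY m)).aestronglyMeasurable
    _ (ae_of_all _ fun _ => (Real.norm_eq_abs _).trans_le (abs_prod_clamp_le hc _))

lemma integrable_prod_of_integrable_abs_rpow (hY : ∀ m, Measurable (Y m))
    (hp : (Fintype.card ι : ℝ) ≤ p) (hint : ∀ m, Integrable (fun ω => |Y m ω| ^ p) μ) :
    Integrable (fun ω => ∏ m, Y m ω) μ := by
  have hsum := integrable_finsetSum Finset.univ fun m _ => hint m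
  refine ((integrable_const 1).add (hsum.const_mul 2)).mono'
    (Finset.measurable_prod _ fun m _ => hY m).aestronglyMeasurable (ae_of_all _ fun ω => ?_)
  have h := abs_prod_sub_prod_clamp_le (fun m => Y m ω) zero_lt_one hp
  rw [Real.one_rpow, div_one] at h
  have h1 := abs_prod_clamp_le zero_le_one (fun m => Y m ω)
  rw [one_pow] at h1
  rw [Real.norm_eq_abs, Pi.add_apply]
  linarith [abs_sub_abs_le_abs_sub (∏ m, Y m ω) (∏ m, clamp 1 (Y m ω))]

lemma abs_integral_prod_sub_integral_prod_clamp_le (hY : ∀ m, Measurable (Y m))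
    (hp : (Fintype.card ι : ℝ) ≤ p) (hint : ∀ m, Integrable (fun ω => |Y m ω| ^ p) μ)
    {M : ℝ} (hM : ∀ m, ∫ ω, |Y m ω| ^ p ∂μ ≤ M) {c : ℝ} (hc : 0 < c) :
    |∫ ω, ∏ m, Y m ω ∂μ - ∫ ω, ∏ m, clamp c (Y m ω) ∂μ|
      ≤ 2 * Fintype.card ι * M / c ^ (p - Fintype.card ι) := by
  have hsum : Integrable (fun ω => ∑ m, |Y m ω| ^ p) μ := integrable_finsetSum _ fun m _ => hint m
  rw [← integral_sub (integrable_prod_of_integrable_abs_rpow hY hp hint)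
    (integrable_prod_clamp hY hc.le)]
  calc |∫ ω, (∏ m, Y m ω - ∏ m, clamp c (Y m ω)) ∂μ|
      ≤ ∫ ω, 2 * (∑ m, |Y m ω| ^ p) / c ^ (p - Fintype.card ι) ∂μ :=
        (abs_integral_le_integral_abs).trans <| integral_mono_of_nonneg
          (ae_of_all _ fun _ => abs_nonneg _) ((hsum.const_mul 2).div_const _)
          (ae_of_all _ fun ω => abs_prod_sub_prod_clamp_le (fun m => Y m ω) hc hp)
    _ ≤ 2 * Fintype.card ι * M / c ^ (p - Fintype.card ι) := by
        rw [integral_div, integral_const_mul, integral_finsetSum _ fun m _ => hint m]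
        have hS : ∑ m, ∫ ω, |Y m ω| ^ p ∂μ ≤ Fintype.card ι * M := by
          simpa using Finset.sum_le_sum fun m (_ : m ∈ Finset.univ) => hM m
        exact div_le_div_of_nonneg_right (by linarith) (by positivity)

end Truncation

section UniformMoments

variable {Ω : Type*} [MeasurableSpace Ω] {μ : Measure Ω} [IsProbabilityMeasure μ]
  {X : ℕ → Ω → ℝ} {δ M : ℝ}

lemma abs_integral_mul_sub_integral_mul_clamp_le (hX : ∀ n, Measurable (X n)) (hδ : 0 < δ)
    (hint : ∀ n, Integrable (fun ω => |X n ω| ^ (4 + δ)) μ)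
    (hM : ∀ n, ∫ ω, |X n ω| ^ (4 + δ) ∂μ ≤ M) (a b : ℕ) {c : ℝ} (hc : 0 < c) :
    |∫ ω, X a ω * X b ω ∂μ - ∫ ω, clamp c (X a ω) * clamp c (X b ω) ∂μ|
      ≤ 4 * M / c ^ (2 + δ) := by
  have h := abs_integral_prod_sub_integral_prod_clamp_le (μ := μ) (Y := ![X a, X b])
    (p := 4 + δ) (M := M) (by simp [Fin.forall_fin_two, hX]) (by simp; linarith)
    (by simp [Fin.forall_fin_two, hint]) (by simp [Fin.forall_fin_two, hM]) hc
  convert h using 3 <;> simp [Fin.prod_univ_two] <;> ring_nf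

lemma abs_integral_mul_mul_sub_integral_mul_mul_clamp_le (hX : ∀ n, Measurable (X n))
    (hδ : 0 < δ) (hint : ∀ n, Integrable (fun ω => |X n ω| ^ (4 + δ)) μ)
    (hM : ∀ n, ∫ ω, |X n ω| ^ (4 + δ) ∂μ ≤ M) (i j k l : ℕ) {c : ℝ} (hc : 0 < c) :
    |∫ ω, X i ω * X j ω * (X k ω * X l ω) ∂μ
      - ∫ ω, clamp c (X i ω) * clamp c (X j ω) * (clamp c (X k ω) * clamp c (X l ω)) ∂μ|
      ≤ 8 * M / c ^ δ := by
  have h := abs_integral_prod_sub_integral_prod_clamp_le (μ := μ) (Y := ![X i, X j, X k, X l])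
    (p := 4 + δ) (M := M) (by simp [Fin.forall_fin_succ, hX]) (by simp; linarith)
    (by simp [Fin.forall_fin_succ, hint]) (by simp [Fin.forall_fin_succ, hM]) hc
  convert h using 3 <;> simp [Fin.prod_univ_four, mul_assoc]; norm_num

lemma abs_cov_mul_sub_cov_mul_clamp_le (hX : ∀ n, Measurable (X n)) (hδ : 0 < δ)
    (hint : ∀ n, Integrable (fun ω => |X n ω| ^ (4 + δ)) μ)
    (hM : ∀ n, ∫ ω, |X n ω| ^ (4 + δ) ∂μ ≤ M) (i j k l : ℕ) {c : ℝ} (hc : 1 ≤ c) :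
    |cov μ (fun ω => X i ω * X j ω) (fun ω => X k ω * X l ω)
      - cov μ (fun ω => clamp c (X i ω) * clamp c (X j ω))
          (fun ω => clamp c (X k ω) * clamp c (X l ω))|
      ≤ 16 * M * (1 + M) / c ^ δ := by
  have hc0 : 0 < c := by linarith
  have hM0 : 0 ≤ M := (integral_nonneg fun ω => by positivity).trans (hM 0)
  have hUV := abs_integral_mul_mul_sub_integral_mul_mul_clamp_le hX hδ hint hM i j k l hc0
  have hU := abs_integral_mul_sub_integral_mul_clamp_le hX hδ hint hM i j hc0
  have hV := abs_integral_mul_sub_integral_mul_clamp_le hX hδ hint hM k l hc0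
  have hU' : |∫ ω, clamp c (X i ω) * clamp c (X j ω) ∂μ| ≤ c ^ 2 :=
    abs_integral_le_of_abs_le fun ω => abs_clamp_mul_clamp_le hc0.le _ _
  have hVint : |∫ ω, X k ω * X l ω ∂μ| ≤ 1 + 4 * M := by
    have h := abs_integral_mul_sub_integral_mul_clamp_le hX hδ hint hM k l zero_lt_one
    have h1 : |∫ ω, clamp 1 (X k ω) * clamp 1 (X l ω) ∂μ| ≤ 1 := by
      simpa using abs_integral_le_of_abs_le (μ := μ) fun ω => abs_clamp_mul_clamp_le zero_le_one
        (X k ω) (X l ω)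
    rw [Real.one_rpow, div_one] at h
    linarith [abs_sub_abs_le_abs_sub (∫ ω, X k ω * X l ω ∂μ)
      (∫ ω, clamp 1 (X k ω) * clamp 1 (X l ω) ∂μ)]
  have hcδ : 0 < c ^ δ := by positivity
  have hc2δ : c ^ (2 + δ) = c ^ 2 * c ^ δ := by rw [Real.rpow_add hc0, Real.rpow_two]
  calc _ ≤ 8 * M / c ^ δ + 4 * M / c ^ (2 + δ) * (1 + 4 * M) + c ^ 2 * (4 * M / c ^ (2 + δ)) :=
        (abs_cov_sub_cov_le _ _ _ _).trans (by gcongr)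
    _ ≤ 8 * M / c ^ δ + 4 * M * (1 + 4 * M) / c ^ δ + 4 * M / c ^ δ := by
        rw [hc2δ, div_mul_eq_mul_div, ← mul_div_assoc,
          mul_div_mul_left _ _ (by positivity : c ^ 2 ≠ 0)]
        gcongr
        exact le_mul_of_one_le_left hcδ.le (one_le_pow₀ hc)
    _ = 16 * M * (1 + M) / c ^ δ := by ring

end UniformMoments

lemma abs_clamp_mul_clamp_apply_sub_le {c : ℝ} (hc : 0 ≤ c) (a b : ℕ) (x y : ℕ → ℝ) :
    |clamp c (x a) * clamp c (x b) - clamp c (y a) * clamp c (y b)|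
      ≤ 2 * c * ∑ n ∈ ({a, b} : Finset ℕ), |x n - y n| := by
  have ha : |x a - y a| ≤ ∑ n ∈ ({a, b} : Finset ℕ), |x n - y n| :=
    Finset.single_le_sum (f := fun n => |x n - y n|) (fun _ _ => abs_nonneg _) (by simp)
  have hb : |x b - y b| ≤ ∑ n ∈ ({a, b} : Finset ℕ), |x n - y n| :=
    Finset.single_le_sum (f := fun n => |x n - y n|) (fun _ _ => abs_nonneg _) (by simp)
  calc _ ≤ c * (|x a - y a| + |x b - y b|) := abs_clamp_mul_clamp_sub_le hc _ _ _ _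
    _ ≤ 2 * c * ∑ n ∈ ({a, b} : Finset ℕ), |x n - y n| := by nlinarith

lemma sum_sum_natAbs_sub_le_of_antitone {γ : ℕ → ℝ} (hmono : Antitone γ) {I J : Finset ℕ}
    {j k : ℕ} (hI : ∀ a ∈ I, a ≤ j) (hJ : ∀ b ∈ J, k ≤ b) :
    ∑ a ∈ I, ∑ b ∈ J, γ (((b : ℤ) - (a : ℤ)).natAbs) ≤ I.card * J.card * γ (k - j) := by
  have h : ∀ a ∈ I, ∑ b ∈ J, γ (((b : ℤ) - (a : ℤ)).natAbs) ≤ J.card • γ (k - j) :=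
    fun a ha => Finset.sum_le_card_nsmul _ _ _ fun b hb => hmono (by
      have := hI a ha; have := hJ b hb; omega)
  calc _ ≤ I.card • (J.card • γ (k - j)) := Finset.sum_le_card_nsmul _ _ _ h
    _ = I.card * J.card * γ (k - j) := by simp only [nsmul_eq_mul]; ring

lemma abs_cov_clamp_le_of_lWeakDepNat {Ω : Type*} [MeasurableSpace Ω] {μ : Measure Ω}
    {X : ℕ → Ω → ℝ} {γ : ℕ → ℝ} (hdep : LWeakDepNat μ X γ) (hγ : ∀ n, 0 ≤ γ n)
    (hmono : Antitone γ) {i j k l : ℕ} (hij : i ≤ j) (hjk : j < k) (hkl : k ≤ l) {c : ℝ}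
    (hc : 0 ≤ c) :
    |cov μ (fun ω => clamp c (X i ω) * clamp c (X j ω))
        (fun ω => clamp c (X k ω) * clamp c (X l ω))| ≤ 16 * c ^ 2 * γ (k - j) := by
  have hdisj : Disjoint ({i, j} : Finset ℕ) {k, l} := by
    simp only [Finset.disjoint_insert_left, Finset.disjoint_singleton_left, Finset.mem_insert,
      Finset.mem_singleton]
    omega
  have hsum := sum_sum_natAbs_sub_le_of_antitone hmono (I := {i, j}) (J := {k, l})
    (j := j) (k := k) (by simp [hij]) (by simp [hkl])
  have hcard : ((({i, j} : Finset ℕ).card : ℝ)) * ({k, l} : Finset ℕ).card ≤ 2 * 2 := by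
    gcongr <;> exact_mod_cast Finset.card_le_two
  calc _ ≤ 2 * c * (2 * c) * ∑ a ∈ {i, j}, ∑ b ∈ {k, l}, γ (((b : ℤ) - (a : ℤ)).natAbs) :=
        hdep {i, j} {k, l} hdisj _ _ (2 * c) (2 * c) (abs_clamp_mul_clamp_apply_sub_le hc i j)
          (abs_clamp_mul_clamp_apply_sub_le hc k l)
    _ ≤ 2 * c * (2 * c) * (2 * 2 * γ (k - j)) := by
        gcongr
        exact hsum.trans (mul_le_mul_of_nonneg_right hcard (hγ _))
    _ = 16 * c ^ 2 * γ (k - j) := by ring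

lemma le_mul_rpow_of_forall_le {a g B K D δ : ℝ} (hδ : 0 < δ) (hg : 0 ≤ g) (hB : 0 ≤ B)
    (hK : 0 ≤ K) (h : ∀ c, 1 ≤ c → a ≤ B * c ^ 2 * g + K / c ^ δ) (hD : a ≤ D) :
    a ≤ max (B + K) D * g ^ (δ / (4 + δ)) := by
  have hθ : 0 < δ / (4 + δ) := by positivity
  rcases hg.eq_or_lt with rfl | hg0
  · have hlim : Tendsto (fun c : ℝ => K * c ^ (-δ)) atTop (nhds 0) := by
      simpa using (tendsto_rpow_neg_atTop hδ).const_mul K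
    have ha : a ≤ 0 := ge_of_tendsto hlim <| eventually_atTop.2 ⟨1, fun c hc => by
      simpa [Real.rpow_neg (by linarith : (0 : ℝ) ≤ c), div_eq_mul_inv] using h c hc⟩
    simpa [Real.zero_rpow hθ.ne'] using ha
  rcases le_or_gt g 1 with hg1 | hg1
  · set c := g ^ (-(4 + δ)⁻¹)
    have hc1 : 1 ≤ c := Real.one_le_rpow_of_pos_of_le_one_of_nonpos hg0 hg1 (by
      have : 0 < (4 + δ)⁻¹ := by positivity
      linarith)
    have hc2 : c ^ 2 * g = g ^ ((2 + δ) / (4 + δ)) := by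
      rw [← Real.rpow_natCast, ← Real.rpow_mul hg0.le, ← Real.rpow_add_one hg0.ne']
      congr 1; field_simp; push_cast; ring
    have hcδ : K / c ^ δ = K * g ^ (δ / (4 + δ)) := by
      rw [← Real.rpow_mul hg0.le, div_eq_mul_inv, ← Real.rpow_neg hg0.le]
      congr 2; field_simp
    have hmono : g ^ ((2 + δ) / (4 + δ)) ≤ g ^ (δ / (4 + δ)) :=
      Real.rpow_le_rpow_of_exponent_ge hg0 hg1 (by gcongr; linarith)
    calc a ≤ B * c ^ 2 * g + K / c ^ δ := h c hc1
      _ = B * g ^ ((2 + δ) / (4 + δ)) + K * g ^ (δ / (4 + δ)) := by rw [mul_assoc, hc2, hcδ]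
      _ ≤ (B + K) * g ^ (δ / (4 + δ)) := by nlinarith
      _ ≤ max (B + K) D * g ^ (δ / (4 + δ)) := by gcongr; exact le_max_left _ _
  · calc a ≤ D := hD
      _ ≤ max (B + K) D := le_max_right _ _
      _ ≤ max (B + K) D * g ^ (δ / (4 + δ)) :=
        le_mul_of_one_le_right ((by positivity : 0 ≤ B + K).trans (le_max_left _ _))
          (Real.one_le_rpow hg1.le hθ.le)

lemma rpow_le_mul_rpow_neg_two_of_le {g c₀ x δ : ℝ} (hδ : 0 < δ) (hg : 0 ≤ g) (hx : 0 < x)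
    (h : g ≤ c₀ * x ^ (-(2 + 8 / δ))) :
    g ^ (δ / (4 + δ)) ≤ c₀ ^ (δ / (4 + δ)) * x ^ (-2 : ℝ) := by
  have hc₀ : 0 ≤ c₀ := nonneg_of_mul_nonneg_left (hg.trans h) (by positivity)
  calc g ^ (δ / (4 + δ)) ≤ (c₀ * x ^ (-(2 + 8 / δ))) ^ (δ / (4 + δ)) :=
        Real.rpow_le_rpow hg h (by positivity)
    _ = c₀ ^ (δ / (4 + δ)) * x ^ (-2 : ℝ) := by
        rw [Real.mul_rpow hc₀ (by positivity), ← Real.rpow_mul hx.le]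
        congr 2; field_simp; ring

lemma abs_cov_mul_le_of_lWeakDepNat {Ω : Type*} [MeasurableSpace Ω] {μ : Measure Ω}
    [IsProbabilityMeasure μ] {X : ℕ → Ω → ℝ} {γ : ℕ → ℝ} {δ M : ℝ}
    (hX : ∀ n, Measurable (X n)) (hδ : 0 < δ)
    (hint : ∀ n, Integrable (fun ω => |X n ω| ^ (4 + δ)) μ)
    (hM : ∀ n, ∫ ω, |X n ω| ^ (4 + δ) ∂μ ≤ M) (hdep : LWeakDepNat μ X γ) (hγ : ∀ n, 0 ≤ γ n)
    (hmono : Antitone γ) {i j k l : ℕ} (hij : i ≤ j) (hjk : j < k) (hkl : k ≤ l) :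
    |cov μ (fun ω => X i ω * X j ω) (fun ω => X k ω * X l ω)|
      ≤ max (16 + 16 * M * (1 + M)) (2 + 16 * M * (1 + M)) * γ (k - j) ^ (δ / (4 + δ)) := by
  have hM0 : 0 ≤ M := (integral_nonneg fun ω => by positivity).trans (hM 0)
  have htrunc c (hc : 1 ≤ c) := abs_sub_abs_le_abs_sub _ _ |>.trans
    (abs_cov_mul_sub_cov_mul_clamp_le hX hδ hint hM i j k l hc)
  refine le_mul_rpow_of_forall_le hδ (hγ _) (by norm_num) (by positivity) (fun c hc => ?_) ?_
  · linarith [htrunc c hc, abs_cov_clamp_le_of_lWeakDepNat hdep hγ hmono hij hjk hkl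
      (zero_le_one.trans hc)]
  · have := abs_cov_le_of_abs_le (μ := μ)
      (fun ω => abs_clamp_mul_clamp_le zero_le_one (X i ω) (X j ω))
      (fun ω => abs_clamp_mul_clamp_le zero_le_one (X k ω) (X l ω))
    have h1 := htrunc 1 le_rfl
    simp only [one_pow, mul_one, Real.one_rpow, div_one] at this h1
    linarith

theorem stmt15_general {Ω : Type*} [MeasurableSpace Ω] (μ : Measure Ω) [IsProbabilityMeasure μ]
    (X : ℕ → Ω → ℝ) (hmeas : ∀ n, Measurable (X n))
    (γ : ℕ → ℝ) (hγ : ∀ k, 0 ≤ γ k) (hmono : Antitone γ)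
    (hdep : LWeakDepNat μ X γ)
    (hstat : ∀ k m : ℕ, IdentDistrib (fun ω (i : Fin m) => X (i + k) ω)
      (fun ω (i : Fin m) => X i ω) μ μ)
    (δ : ℝ) (hδ : 0 < δ)
    (hmom : Integrable (fun ω => |X 1 ω| ^ (4 + δ)) μ) :
    (∃ C : ℝ, 0 < C ∧ ∀ i j k l : ℕ, i ≤ j → j < k → k ≤ l →
      |cov μ (fun ω => X i ω * X j ω) (fun ω => X k ω * X l ω)|
        ≤ C * γ (k - j) ^ (δ / (4 + δ))) ∧
    ((∃ c0 : ℝ, ∀ k : ℕ, 1 ≤ k → γ k ≤ c0 * (k : ℝ) ^ (-(2 + 8 / δ))) →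
      ∃ C' : ℝ, ∀ i j k l : ℕ, i ≤ j → j < k → k ≤ l →
        |cov μ (fun ω => X i ω * X j ω) (fun ω => X k ω * X l ω)|
          ≤ C' * ((k : ℝ) - (j : ℝ)) ^ (-(2 : ℝ))) := by
  have hX0 n : IdentDistrib (X n) (X 0) μ μ := by
    simpa [Function.comp_def] using (hstat n 1).comp (measurable_pi_apply 0)
  have hident n : IdentDistrib (fun ω => |X n ω| ^ (4 + δ)) (fun ω => |X 1 ω| ^ (4 + δ)) μ μ :=
    ((hX0 n).trans (hX0 1).symm).comp (u := fun x => |x| ^ (4 + δ)) (by fun_prop)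
  have hint n := (hident n).integrable_iff.2 hmom
  set M := ∫ ω, |X 1 ω| ^ (4 + δ) ∂μ
  have hM n : ∫ ω, |X n ω| ^ (4 + δ) ∂μ ≤ M := (hident n).integral_eq.le
  set C := max (16 + 16 * M * (1 + M)) (2 + 16 * M * (1 + M))
  have hbound {i j k l : ℕ} (hij : i ≤ j) (hjk : j < k) (hkl : k ≤ l) :=
    abs_cov_mul_le_of_lWeakDepNat hmeas hδ hint hM hdep hγ hmono hij hjk hkl
  refine ⟨⟨C, lt_max_of_lt_left (by positivity), fun _ _ _ _ => hbound⟩, ?_⟩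
  rintro ⟨c₀, hc₀⟩
  refine ⟨C * c₀ ^ (δ / (4 + δ)), fun i j k l hij hjk hkl => ?_⟩
  have hkj : (0 : ℝ) < ((k - j : ℕ) : ℝ) := by exact_mod_cast Nat.sub_pos_of_lt hjk
  calc _ ≤ C * γ (k - j) ^ (δ / (4 + δ)) := hbound hij hjk hkl
    _ ≤ C * (c₀ ^ (δ / (4 + δ)) * ((k - j : ℕ) : ℝ) ^ (-2 : ℝ)) := by
        gcongr
        exact rpow_le_mul_rpow_neg_two_of_le hδ (hγ _) hkj (hc₀ _ (by omega))
    _ = C * c₀ ^ (δ / (4 + δ)) * ((k : ℝ) - j) ^ (-(2 : ℝ)) := by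
        rw [Nat.cast_sub hjk.le, mul_assoc]

theorem stmt15 {Ω : Type*} [MeasurableSpace Ω] (μ : Measure Ω) [IsProbabilityMeasure μ]
    (X : ℕ → Ω → ℝ) (hmeas : ∀ n, Measurable (X n))
    (γ : ℕ → ℝ) (hγ : ∀ k, 0 ≤ γ k) (hmono : Antitone γ)
    (hdep : LWeakDepNat μ X γ)
    (hstat : ∀ k m : ℕ, IdentDistrib (fun ω (i : Fin m) => X (i + k) ω)
      (fun ω (i : Fin m) => X i ω) μ μ)
    (hcent : ∀ n, ∫ ω, X n ω ∂μ = 0)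
    (δ : ℝ) (hδ : 0 < δ)
    (hmom : Integrable (fun ω => |X 1 ω| ^ (4 + δ)) μ) :
    (∃ C : ℝ, 0 < C ∧ ∀ i j k l : ℕ, i ≤ j → j < k → k ≤ l →
      |cov μ (fun ω => X i ω * X j ω) (fun ω => X k ω * X l ω)|
        ≤ C * γ (k - j) ^ (δ / (4 + δ))) ∧
    ((∃ c0 : ℝ, ∀ k : ℕ, 1 ≤ k → γ k ≤ c0 * (k : ℝ) ^ (-(2 + 8 / δ))) →
      ∃ C' : ℝ, ∀ i j k l : ℕ, i ≤ j → j < k → k ≤ l →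
        |cov μ (fun ω => X i ω * X j ω) (fun ω => X k ω * X l ω)|
          ≤ C' * ((k : ℝ) - (j : ℝ)) ^ (-(2 : ℝ))) :=
  stmt15_general μ X hmeas γ hγ hmono hdep hstat δ hδ hmom
end
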